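/- arXiv:2505.15636 — 6 statements merged into one kernel-verified Lean document; each statement's English description precedes it below -/
import Mathlib

section
/- Let d be a metric, q a query, and γ > 0. Suppose x̃ satisfies: every point w with d(w,q) < (1+γ)·d(q,x̃) belongs to a set E (of 'expanded' nodes), and every out-neighbor of every node in E belongs to a set D (of 'discovered' nodes), with x̃ ∈ E ⊆ D. If G is navigable under d (with all pairwise distances positive and distinct points unique), then every node z ∉ D satisfies d(q,z) ≥ (γ/2)·d(q,x̃). -/
/-- Termination-state guarantee for Adaptive Beam Search on a navigable
graph: if every out-neighbor of every expanded node is discovered (`E ⊆ D`), `x̃ ∈ E`,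
and every discovered node `w` with `d(w,q) < (1+γ)·d(q,x̃)` is expanded, then every
undiscovered node `z ∉ D` satisfies `d(q,z) ≥ (γ/2)·d(q,x̃)`. -/
theorem stmt5 {X : Type*} [MetricSpace X] {n : ℕ} (p : Fin n → X)
    (hinj : Function.Injective p)
    (N : Fin n → Finset (Fin n))
    (hnav : ∀ x y : Fin n, x ≠ y → ∃ z ∈ N x, dist (p z) (p y) < dist (p x) (p y))
    (q : X) (γ : ℝ) (hγ : 0 < γ)
    (E D : Finset (Fin n)) (hED : E ⊆ D)
    (xt : Fin n) (hxt : xt ∈ E)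
    (hexp : ∀ v ∈ E, N v ⊆ D)
    (hterm : ∀ w ∈ D, dist (p w) q < (1 + γ) * dist q (p xt) → w ∈ E) :
    ∀ z : Fin n, z ∉ D → dist q (p z) ≥ γ / 2 * dist q (p xt) := by
  intro z hz
  by_contra hlt
  push_neg at hlt
  -- S : expanded nodes at least as close to z as xt
  set S : Finset (Fin n) := E.filter (fun v => dist (p v) (p z) ≤ dist (p xt) (p z)) with hS
  have hxtS : xt ∈ S := by
    simp [hS, hxt]
  obtain ⟨x, hxS, hxmin⟩ := S.exists_min_image (fun v => dist (p v) (p z)) ⟨xt, hxtS⟩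
  have hxE : x ∈ E := (Finset.mem_filter.mp hxS).1
  have hxle : dist (p x) (p z) ≤ dist (p xt) (p z) := (Finset.mem_filter.mp hxS).2
  have hxz : x ≠ z := fun h => hz (h ▸ hED hxE)
  obtain ⟨w, hwN, hwlt⟩ := hnav x z hxz
  have hwD : w ∈ D := hexp x hxE hwN
  have hwq : dist (p w) q < (1 + γ) * dist q (p xt) := by
    have h1 : dist (p w) q ≤ dist (p w) (p z) + dist (p z) q := dist_triangle _ _ _
    have h2 : dist (p xt) (p z) ≤ dist (p xt) q + dist q (p z) := dist_triangle _ _ _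
    have hqz : dist (p z) q = dist q (p z) := dist_comm _ _
    have hq2 : dist (p xt) q = dist q (p xt) := dist_comm _ _
    nlinarith [hwlt, hxle, dist_nonneg (x := q) (y := p xt)]
  have hwE : w ∈ E := hterm w hwD hwq
  have hwS : w ∈ S := by
    refine Finset.mem_filter.mpr ⟨hwE, le_of_lt (lt_of_lt_of_le hwlt hxle)⟩
  exact absurd (hxmin w hwS) (not_le.mpr hwlt)
end

section
/- In a navigable graph G under metric d, let x̃ be a node, E a set of nodes each of whose out-neighborhoods is contained in a set D ⊇ E, with x̃ ∈ E. For any node z ∉ D, on any monotone path x̃ = p_0 → p_1 → ... → p_ℓ = z in G (with d(p_{i-1}, z) > d(p_i, z) for all i), there exists some index 1 ≤ i ≤ ℓ−1 with p_i ∈ D \ E. In particular ℓ ≥ 2. -/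
/-- On any monotone path from an expanded node `x̃ ∈ E` to an
undiscovered node `z ∉ D` in a graph where out-neighbors of expanded nodes are
discovered, there is an intermediate node `p_i` (with `1 ≤ i ≤ ℓ - 1`) that is
discovered but not expanded; in particular the path has length `ℓ ≥ 2`. -/
theorem stmt6 {X : Type*} [MetricSpace X] {n : ℕ} (p : Fin n → X)
    (N : Fin n → Finset (Fin n))
    (E D : Finset (Fin n)) (hED : E ⊆ D)
    (hexp : ∀ v ∈ E, N v ⊆ D)
    (xt : Fin n) (hxt : xt ∈ E) (z : Fin n) (hz : z ∉ D)
    (ℓ : ℕ) (w : ℕ → Fin n) (hw0 : w 0 = xt) (hwl : w ℓ = z)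
    (hedge : ∀ i < ℓ, w (i + 1) ∈ N (w i))
    (hmono : ∀ i < ℓ, dist (p (w (i + 1))) (p z) < dist (p (w i)) (p z)) :
    (∃ i, 1 ≤ i ∧ i ≤ ℓ - 1 ∧ w i ∈ D ∧ w i ∉ E) ∧ 2 ≤ ℓ := by
  classical
  set P : ℕ → Prop := fun i => w i ∈ E with hP
  have hP0 : P 0 := by simpa [hP, hw0] using hxt
  set j := Nat.findGreatest P ℓ with hj
  have hjle : j ≤ ℓ := Nat.findGreatest_le ℓ
  have hjP : P j := Nat.findGreatest_spec (Nat.zero_le ℓ) hP0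
  have hjmax : ∀ k, j < k → k ≤ ℓ → ¬ P k := fun k hk hk' =>
    Nat.findGreatest_is_greatest hk hk'
  have hjlt : j < ℓ := by
    rcases lt_or_eq_of_le hjle with h | h
    · exact h
    · exfalso; apply hz; apply hED
      have := hjP; rw [hP] at this; rwa [h, hwl] at this
  have hwj1D : w (j + 1) ∈ D := hexp _ hjP (hedge j hjlt)
  have hwj1E : w (j + 1) ∉ E := hjmax (j + 1) (Nat.lt_succ_self j) hjlt
  have hj1ne : j + 1 ≠ ℓ := by
    intro h
    apply hz; rw [← hwl, ← h]; exact hwj1D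
  have hj1lt : j + 1 < ℓ := lt_of_le_of_ne hjlt hj1ne
  have hl2 : 2 ≤ ℓ := by omega
  exact ⟨⟨j + 1, by omega, by omega, hwj1D, hwj1E⟩, hl2⟩
end

section
/- Consider the point set in ℝ²: x_1 = (0,0), x_2 = (1,1), x_3 = (m,1) for m > 2, and points x_4,...,x_n contained in an ε-ball around (1,0) for sufficiently small ε > 0. The graph with bidirectional edges {x_2, x_3} and {x_i, x_j} for all i ∈ {1,2}, j ∈ {4,...,n}, together with all edges among x_4,...,x_n, is navigable under Euclidean distance. -/
/-- A point of the Euclidean plane with the given coordinates. -/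
noncomputable def pt (a b : ℝ) : EuclideanSpace ℝ (Fin 2) := WithLp.toLp 2 ![a, b]

/-- Adjacency of the counterexample graph (0-indexed: nodes `0,1,2` are
`x₁ = (0,0)`, `x₂ = (1,1)`, `x₃ = (m,1)` of the paper, nodes `≥ 3` are the cluster):
bidirectional edge between `1` and `2`, bidirectional edges between `{0,1}` and the
cluster, and all edges among cluster nodes. -/
def exAdj {n : ℕ} (i j : Fin n) : Prop :=
  ((i : ℕ) = 1 ∧ (j : ℕ) = 2) ∨
  ((i : ℕ) = 2 ∧ (j : ℕ) = 1) ∨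
  ((i : ℕ) ≤ 1 ∧ 3 ≤ (j : ℕ)) ∨
  ((j : ℕ) ≤ 1 ∧ 3 ≤ (i : ℕ)) ∨
  (3 ≤ (i : ℕ) ∧ 3 ≤ (j : ℕ) ∧ i ≠ j)

/-!
Every pair of nodes that is not joined by an edge is handled by a single detour. From `(0,0)`
or `(1,1)` one steps into the cluster, which lies within `ε` of `(1,0)` and hence at distance
about `1` from both, while `(0,0)` and `(1,1)` are `√2` apart and `(m,1)` is even farther from
`(0,0)`. From `(m,1)`, whose only neighbour is `(1,1)`, and from the cluster towards `(m,1)`, one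
steps to `(1,1)`. With `ε = 1/(4m)` all these strict inequalities survive the perturbation of
the cluster; the tightest is `m - 1 + ε < √((m - 1)² + 1) = dist (1,0) (m,1)`.
-/

def Navigable {V P : Type*} [PseudoMetricSpace P] (adj : V → V → Prop) (x : V → P) : Prop :=
  ∀ i j, i ≠ j → ∃ z, adj i z ∧ dist (x z) (x j) < dist (x i) (x j)

theorem navigable_of_forall_not_adj {V P : Type*} [MetricSpace P] {adj : V → V → Prop}
    {x : V → P} (hx : ∀ i j, i ≠ j → x i ≠ x j)
    (h : ∀ i j, i ≠ j → ¬ adj i j → ∃ z, adj i z ∧ dist (x z) (x j) < dist (x i) (x j)) :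
    Navigable adj x := by
  intro i j hij
  by_cases hadj : adj i j
  · exact ⟨j, hadj, by simpa using hx i j hij⟩
  · exact h i j hij hadj

section Metric

variable {P : Type*} [PseudoMetricSpace P] {y c p : P} {ε r : ℝ}

theorem dist_lt_of_dist_le_of_add_lt (hy : dist y c ≤ ε) (h : dist c p + ε < r) :
    dist y p < r := by
  linarith [dist_triangle y c p]

theorem lt_dist_of_dist_le_of_add_lt (hy : dist y c ≤ ε) (h : r + ε < dist c p) :
    r < dist y p := by
  linarith [dist_triangle c y p, dist_comm y c]

end Metric

theorem dist_pt (a b c d : ℝ) : dist (pt a b) (pt c d) = √((a - c) ^ 2 + (b - d) ^ 2) := by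
  simp [EuclideanSpace.dist_eq, pt, Fin.sum_univ_two, Real.dist_eq, sq_abs]

theorem exAdj_or_of_ne {n : ℕ} {i j : Fin n} (hij : i ≠ j) :
    exAdj i j ∨ ((i : ℕ) = 0 ∧ ((j : ℕ) = 1 ∨ (j : ℕ) = 2)) ∨ ((i : ℕ) = 1 ∧ (j : ℕ) = 0) ∨
      ((i : ℕ) = 2 ∧ ((j : ℕ) = 0 ∨ 3 ≤ (j : ℕ))) ∨ (3 ≤ (i : ℕ) ∧ (j : ℕ) = 2) := by
  have := Fin.val_ne_of_ne hij
  unfold exAdj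
  omega

section NearOneZero

variable {m ε : ℝ} {y : EuclideanSpace ℝ (Fin 2)}

theorem dist_pt_one_one_lt_of_near (hε : 4 * ε ≤ 1) (hy : dist y (pt 1 0) ≤ ε) :
    dist y (pt 1 1) < dist (pt 0 0) (pt 1 1) := by
  have hε0 : 0 ≤ ε := dist_nonneg.trans hy
  refine dist_lt_of_dist_le_of_add_lt hy ?_
  rw [dist_pt, dist_pt, Real.lt_sqrt (by positivity)]
  norm_num
  nlinarith

theorem dist_pt_zero_zero_lt_of_near (hε : 4 * ε ≤ 1) (hy : dist y (pt 1 0) ≤ ε) :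
    dist y (pt 0 0) < dist (pt 1 1) (pt 0 0) := by
  have hε0 : 0 ≤ ε := dist_nonneg.trans hy
  refine dist_lt_of_dist_le_of_add_lt hy ?_
  rw [dist_pt, dist_pt, Real.lt_sqrt (by positivity)]
  norm_num
  nlinarith

theorem dist_pt_m_one_lt_of_near (hm : 2 < m) (hε : 4 * m * ε ≤ 1)
    (hy : dist y (pt 1 0) ≤ ε) : dist y (pt m 1) < dist (pt 0 0) (pt m 1) := by
  have hε0 : 0 ≤ ε := dist_nonneg.trans hy
  refine dist_lt_of_dist_le_of_add_lt hy ?_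
  rw [dist_pt, dist_pt, Real.lt_sqrt (by positivity)]
  have hs := Real.sq_sqrt (show 0 ≤ (1 - m) ^ 2 + (0 - 1 : ℝ) ^ 2 by positivity)
  have hsm : √((1 - m) ^ 2 + (0 - 1) ^ 2) ≤ m := by
    rw [Real.sqrt_le_left (by linarith)]; nlinarith
  nlinarith [Real.sqrt_nonneg ((1 - m) ^ 2 + (0 - 1) ^ 2)]

theorem dist_pt_one_one_lt_dist_pt_m_one (hm : 1 < m) :
    dist (pt 1 1) (pt 0 0) < dist (pt m 1) (pt 0 0) := by
  rw [dist_pt, dist_pt]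
  exact Real.sqrt_lt_sqrt (by positivity) (by nlinarith)

theorem dist_pt_one_one_lt_dist_pt_m_one_of_near (hm : 2 < m) (hε : 4 * m * ε ≤ 1)
    (hy : dist y (pt 1 0) ≤ ε) : dist (pt 1 1) y < dist (pt m 1) y := by
  have hε0 : 0 ≤ ε := dist_nonneg.trans hy
  rw [dist_comm, dist_comm (pt m 1)]
  refine dist_lt_of_dist_le_of_add_lt hy (lt_dist_of_dist_le_of_add_lt hy ?_)
  rw [dist_pt, dist_pt, Real.lt_sqrt (by positivity)]
  norm_num
  nlinarith

theorem dist_pt_one_one_pt_m_one_lt_of_near (hm : 2 < m) (hε : 4 * m * ε ≤ 1)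
    (hy : dist y (pt 1 0) ≤ ε) : dist (pt 1 1) (pt m 1) < dist y (pt m 1) := by
  have hε0 : 0 ≤ ε := dist_nonneg.trans hy
  refine lt_dist_of_dist_le_of_add_lt hy ?_
  rw [dist_pt, dist_pt, Real.lt_sqrt (by positivity)]
  norm_num
  rw [Real.sqrt_sq_eq_abs, abs_of_neg (by linarith)]
  nlinarith

end NearOneZero

/-- For `m > 2` and sufficiently small `ε > 0`, the graph described by
`exAdj` on the points `x 0 = (0,0)`, `x 1 = (1,1)`, `x 2 = (m,1)` and points
`x i` (`i ≥ 3`) in an `ε`-ball around `(1,0)` is navigable under Euclidean distance. -/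
theorem stmt8 (m : ℝ) (hm : 2 < m) :
    ∃ ε : ℝ, 0 < ε ∧
      ∀ (n : ℕ) (hn : 4 ≤ n) (x : Fin n → EuclideanSpace ℝ (Fin 2)),
        (∀ i j : Fin n, i ≠ j → x i ≠ x j) →
        x ⟨0, by omega⟩ = pt 0 0 →
        x ⟨1, by omega⟩ = pt 1 1 →
        x ⟨2, by omega⟩ = pt m 1 →
        (∀ i : Fin n, 3 ≤ (i : ℕ) → dist (x i) (pt 1 0) ≤ ε) →
        ∀ i j : Fin n, i ≠ j →
          ∃ z : Fin n, exAdj i z ∧ dist (x z) (x j) < dist (x i) (x j) := by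
  have hm0 : 0 < m := by linarith
  have hε : 4 * m * (1 / (4 * m)) ≤ 1 := (mul_one_div_cancel (by positivity)).le
  have hε₀ : 4 * (1 / (4 * m)) ≤ 1 := by nlinarith
  refine ⟨1 / (4 * m), by positivity, fun n hn x hx h0 h1 h2 hc => ?_⟩
  have hx_eq {a : ℕ} {p} (ha : a < n) (hp : x ⟨a, ha⟩ = p) (i : Fin n) (hi : (i : ℕ) = a) :
      x i = p := by rwa [show i = ⟨a, ha⟩ from Fin.ext hi]
  set t : Fin n := ⟨1, by omega⟩
  set k : Fin n := ⟨3, by omega⟩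
  have hk : dist (x k) (pt 1 0) ≤ 1 / (4 * m) := hc k le_rfl
  show Navigable exAdj x
  refine navigable_of_forall_not_adj hx fun i j hij hnadj => ?_
  rcases (exAdj_or_of_ne hij).resolve_left hnadj with
    ⟨hi, hj | hj⟩ | ⟨hi, hj⟩ | ⟨hi, hj | hj⟩ | ⟨hi, hj⟩
  · refine ⟨k, by simp [exAdj, k, hi], ?_⟩
    rw [hx_eq _ h0 i hi, hx_eq _ h1 j hj]
    exact dist_pt_one_one_lt_of_near hε₀ hk
  · refine ⟨k, by simp [exAdj, k, hi], ?_⟩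
    rw [hx_eq _ h0 i hi, hx_eq _ h2 j hj]
    exact dist_pt_m_one_lt_of_near hm hε hk
  · refine ⟨k, by simp [exAdj, k, hi], ?_⟩
    rw [hx_eq _ h1 i hi, hx_eq _ h0 j hj]
    exact dist_pt_zero_zero_lt_of_near hε₀ hk
  · refine ⟨t, by simp [exAdj, t, hi], ?_⟩
    rw [hx_eq _ h2 i hi, hx_eq _ h0 j hj, h1]
    exact dist_pt_one_one_lt_dist_pt_m_one (by linarith)
  · refine ⟨t, by simp [exAdj, t, hi], ?_⟩
    rw [hx_eq _ h2 i hi, h1]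
    exact dist_pt_one_one_lt_dist_pt_m_one_of_near hm hε (hc j hj)
  · refine ⟨t, by simp [exAdj, t, hi], ?_⟩
    rw [hx_eq _ h2 j hj, h1]
    exact dist_pt_one_one_pt_m_one_lt_of_near hm hε (hc i hi)
end

section
/- Suppose Adaptive Beam Search with parameter γ = 2 is run on a navigable graph G under a metric d with a query q, and terminates returning a set B of k nodes. Then B is exactly the set of k nearest neighbors of q among all nodes: every node v ∉ B satisfies d(q,v) ≥ max_{j ∈ B} d(q,j). -/
open Classical in
/-- Pop from the candidate set `C` an element minimizing `f` (distance to the query). -/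
noncomputable def pickMin {n : ℕ} (f : Fin n → ℝ) (C : Finset (Fin n))
    (hC : C.Nonempty) : Fin n :=
  (C.exists_min_image f hC).choose

open Classical in
/-- Adaptive Beam Search with parameter `γ` and target `k`: repeatedly pop the closest
candidate `x`; terminate returning the discovered set `D` if there are `k` discovered
nodes `j` with `(1+γ)·f j ≤ f x`, otherwise expand `x`. -/
noncomputable def absRun {n : ℕ} (N : Fin n → Finset (Fin n)) (f : Fin n → ℝ)
    (k : ℕ) (γ : ℝ) : ℕ → Finset (Fin n) → Finset (Fin n) → Finset (Fin n)
  | 0, D, _ => D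
  | (fuel + 1), D, C =>
    if hC : C.Nonempty then
      let x := pickMin f C hC
      if (∃ S : Finset (Fin n), S ⊆ D ∧ S.card = k ∧
            ∀ j ∈ S, (1 + γ) * f j ≤ f x) then D
      else absRun N f k γ fuel (D ∪ N x) ((C.erase x) ∪ (N x \ D))
    else D

/-! Every expanded node has all of its out-neighbours discovered, so by navigability the discovered
node nearest to an undiscovered node `v` is still unexpanded, hence at least as far from `q` as the
node `x` at which the search stops. For `j ∈ B`, the stopping rule and the triangle inequality give
`(1 + γ) d(q,j) ≤ d(q,x) ≤ d(q,j) + 2 d(q,v)`, i.e. `γ d(q,j) ≤ 2 d(q,v)`. A run that stops for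
any other reason (empty frontier or exhausted fuel) has discovered every node. -/

open Finset

section

variable {V X : Type*} [PseudoMetricSpace X]

def IsNavigable (p : V → X) (N : V → Finset V) : Prop :=
  ∀ x y, x ≠ y → ∃ z ∈ N x, dist (p z) (p y) < dist (p x) (p y)

/-- `D` is the set of discovered nodes and `C ⊆ D` the frontier of those not yet expanded. -/
structure IsSearchState (N : V → Finset V) (D C : Finset V) : Prop where
  nonempty : D.Nonempty
  frontier_subset : C ⊆ D
  neighbors_subset : ∀ u ∈ D, u ∉ C → N u ⊆ D

variable {p : V → X} {N : V → Finset V} {D C : Finset V}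

lemma isSearchState_singleton (s : V) : IsSearchState N {s} {s} :=
  ⟨singleton_nonempty s, Subset.rfl, fun _ hu hu' => absurd hu hu'⟩

lemma IsSearchState.exists_frontier_closest (hnav : IsNavigable p N)
    (h : IsSearchState N D C) {v : V} (hv : v ∉ D) :
    ∃ u ∈ C, ∀ j ∈ D, dist (p u) (p v) ≤ dist (p j) (p v) := by
  obtain ⟨u, hu, hmin⟩ := D.exists_min_image (fun j => dist (p j) (p v)) h.nonempty
  by_contra! hC
  have huC : u ∉ C := fun huC => by
    obtain ⟨j, hj, hlt⟩ := hC u huC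
    exact (hmin j hj).not_gt hlt
  obtain ⟨z, hz, hlt⟩ := hnav u v (ne_of_mem_of_not_mem hu hv)
  exact (hmin z (h.neighbors_subset u hu huC hz)).not_gt hlt

lemma IsSearchState.eq_univ_of_frontier_eq_empty [Fintype V] (hnav : IsNavigable p N)
    (h : IsSearchState N D ∅) : D = univ :=
  eq_univ_of_forall fun _ => by_contra fun hv => by
    obtain ⟨u, hu, -⟩ := h.exists_frontier_closest hnav hv
    exact notMem_empty u hu

variable [DecidableEq V]

lemma IsSearchState.expand (h : IsSearchState N D C) (x : V) :
    IsSearchState N (D ∪ N x) (C.erase x ∪ (N x \ D)) where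
  nonempty := h.nonempty.mono subset_union_left
  frontier_subset := union_subset ((erase_subset x C).trans (h.frontier_subset.trans
    subset_union_left)) (sdiff_subset.trans subset_union_right)
  neighbors_subset u hu hu' := by
    by_cases hux : u = x
    · exact hux ▸ subset_union_right
    have huD : u ∈ D := by
      by_contra huD
      exact hu' (mem_union_right _ (mem_sdiff.2 ⟨(mem_union.1 hu).resolve_left huD, huD⟩))
    have huC : u ∉ C := fun huC => hu' (mem_union_left _ (mem_erase.2 ⟨hux, huC⟩))
    exact (h.neighbors_subset u huD huC).trans subset_union_left

lemma card_sdiff_lt_card_sdiff_expand {x : V} (hCD : C ⊆ D) (hx : x ∈ C) :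
    #(D \ C) < #((D ∪ N x) \ (C.erase x ∪ (N x \ D))) := by
  refine card_lt_card (ssubset_iff_of_subset ?_ |>.2 ⟨x, ?_, ?_⟩)
  · intro u hu
    simp only [mem_sdiff, mem_union, mem_erase] at hu ⊢
    tauto
  · simp [hCD hx]
  · simp [hx]

def StopsAt (f : V → ℝ) (k : ℕ) (γ : ℝ) (D : Finset V) (x : V) : Prop :=
  ∃ S ⊆ D, #S = k ∧ ∀ j ∈ S, (1 + γ) * f j ≤ f x

def IsStoppedState (N : V → Finset V) (f : V → ℝ) (k : ℕ) (γ : ℝ) (D : Finset V) : Prop :=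
  ∃ C, IsSearchState N D C ∧ ∃ x ∈ C, (∀ y ∈ C, f x ≤ f y) ∧ StopsAt f k γ D x

lemma exists_mem_le_of_card_eq {β : Type*} [Preorder β] {f : V → β} {B S : Finset V}
    (hB : ∀ j ∈ B, ∀ v ∈ D, v ∉ B → f j ≤ f v) (hSD : S ⊆ D) (hcard : #S = #B)
    {j : V} (hj : j ∈ B) : ∃ s ∈ S, f j ≤ f s := by
  by_cases hSB : S ⊆ B
  · exact ⟨j, eq_of_subset_of_card_le hSB hcard.ge ▸ hj, le_rfl⟩
  · obtain ⟨s, hsS, hsB⟩ := not_subset.1 hSB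
    exact ⟨s, hsS, hB j hj s (hSD hsS) hsB⟩

lemma IsStoppedState.mul_dist_le (hnav : IsNavigable p N) {q : X} {γ : ℝ} (hγ : -1 ≤ γ)
    {B : Finset V} (hBD : B ⊆ D) (hstop : IsStoppedState N (fun i => dist q (p i)) #B γ D)
    (hB : ∀ j ∈ B, ∀ v ∈ D, v ∉ B → dist q (p j) ≤ dist q (p v))
    {v : V} (hv : v ∉ D) {j : V} (hj : j ∈ B) : γ * dist q (p j) ≤ 2 * dist q (p v) := by
  obtain ⟨C, h, x, hx, hxmin, S, hSD, hScard, hSx⟩ := hstop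
  obtain ⟨u, hu, hclosest⟩ := h.exists_frontier_closest hnav hv
  obtain ⟨s, hs, hjs⟩ := exists_mem_le_of_card_eq hB hSD hScard hj
  have hfar : dist q (p u) ≤ dist q (p j) + 2 * dist q (p v) :=
    calc dist q (p u) ≤ dist q (p v) + dist (p u) (p v) := dist_triangle_right _ _ _
      _ ≤ dist q (p v) + dist (p j) (p v) := by gcongr; exact hclosest j (hBD hj)
      _ ≤ dist q (p v) + (dist q (p j) + dist q (p v)) := by gcongr; exact dist_triangle_left _ _ _
      _ = dist q (p j) + 2 * dist q (p v) := by ring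
  have hnear : (1 + γ) * dist q (p j) ≤ dist q (p u) :=
    calc (1 + γ) * dist q (p j) ≤ (1 + γ) * dist q (p s) := by gcongr; linarith
      _ ≤ dist q (p x) := hSx s hs
      _ ≤ dist q (p u) := hxmin u hu
  linarith

variable {n : ℕ} {p : Fin n → X} {N : Fin n → Finset (Fin n)}

lemma pickMin_mem (f : Fin n → ℝ) (C : Finset (Fin n)) (hC : C.Nonempty) :
    pickMin f C hC ∈ C :=
  (C.exists_min_image f hC).choose_spec.1

lemma pickMin_le (f : Fin n → ℝ) (C : Finset (Fin n)) (hC : C.Nonempty) :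
    ∀ y ∈ C, f (pickMin f C hC) ≤ f y :=
  (C.exists_min_image f hC).choose_spec.2

lemma absRun_eq_univ_or_isStoppedState (hnav : IsNavigable p N) (f : Fin n → ℝ) (k : ℕ) (γ : ℝ)
    {fuel : ℕ} {D C : Finset (Fin n)} (h : IsSearchState N D C) (hfuel : n ≤ fuel + #(D \ C)) :
    absRun N f k γ fuel D C = univ ∨ IsStoppedState N f k γ (absRun N f k γ fuel D C) := by
  induction fuel generalizing D C with
  | zero =>
    left
    refine eq_univ_of_card D (le_antisymm (card_le_univ D) ?_)
    rw [zero_add] at hfuel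
    simpa using hfuel.trans (card_le_card sdiff_subset)
  | succ fuel ih =>
    rw [absRun]
    dsimp only
    split_ifs with hC hstop
    · exact Or.inr ⟨C, h, pickMin f C hC, pickMin_mem f C hC, pickMin_le f C hC, hstop⟩
    · refine ih (h.expand _) ?_
      have := card_sdiff_lt_card_sdiff_expand h.frontier_subset (pickMin_mem f C hC) (N := N)
      omega
    · obtain rfl := not_nonempty_iff_eq_empty.1 hC
      exact Or.inl (h.eq_univ_of_frontier_eq_empty hnav)

theorem absRun_mul_dist_le (p : Fin n → X) (N : Fin n → Finset (Fin n)) (hnav : IsNavigable p N)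
    (q : X) {γ : ℝ} (hγ : -1 ≤ γ) (hγ2 : γ ≤ 2) (s : Fin n) (B : Finset (Fin n))
    (hBD : B ⊆ absRun N (fun i => dist q (p i)) #B γ n {s} {s})
    (hB : ∀ j ∈ B, ∀ v ∈ absRun N (fun i => dist q (p i)) #B γ n {s} {s},
      v ∉ B → dist q (p j) ≤ dist q (p v)) :
    ∀ v, v ∉ B → ∀ j ∈ B, γ * dist q (p j) ≤ 2 * dist q (p v) := by
  intro v hv j hj
  by_cases hvR : v ∈ absRun N (fun i => dist q (p i)) #B γ n {s} {s}
  · have hjv := hB j hj v hvR hv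
    nlinarith [dist_nonneg (x := q) (y := p j)]
  obtain hR | hstop := absRun_eq_univ_or_isStoppedState hnav (fun i => dist q (p i)) #B γ
    (isSearchState_singleton s) (fuel := n) (Nat.le_add_right _ _)
  · exact absurd (hR ▸ mem_univ v) hvR
  · exact hstop.mul_dist_le hnav hγ hBD hB hvR hj

end

theorem stmt12_general {X : Type*} [MetricSpace X] {n : ℕ} (p : Fin n → X)
    (N : Fin n → Finset (Fin n))
    (hnav : ∀ x y : Fin n, x ≠ y → ∃ z ∈ N x, dist (p z) (p y) < dist (p x) (p y))
    (q : X) (k : ℕ) (s : Fin n)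
    (B : Finset (Fin n))
    (hBD : B ⊆ absRun N (fun i => dist q (p i)) k 2 n {s} {s})
    (hcard : B.card = k)
    (hB : ∀ j ∈ B, ∀ v ∈ absRun N (fun i => dist q (p i)) k 2 n {s} {s},
      v ∉ B → dist q (p j) ≤ dist q (p v)) :
    ∀ v : Fin n, v ∉ B → ∀ j ∈ B, dist q (p j) ≤ dist q (p v) := by
  subst hcard
  intro v hv j hj
  have := absRun_mul_dist_le p N hnav q (by norm_num) le_rfl s B hBD hB v hv j hj
  linarith

/-- Adaptive Beam Search with `γ = 2` on a navigable graph returns the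
exact `k` nearest neighbors: if `B` is the set of `k` closest discovered nodes at
termination, every node `v ∉ B` satisfies `d(q,v) ≥ max_{j ∈ B} d(q,j)`. -/
theorem stmt12 {X : Type*} [MetricSpace X] {n : ℕ} (p : Fin n → X)
    (hinj : Function.Injective p)
    (N : Fin n → Finset (Fin n))
    (hnav : ∀ x y : Fin n, x ≠ y → ∃ z ∈ N x, dist (p z) (p y) < dist (p x) (p y))
    (q : X) (k : ℕ) (hk : 1 ≤ k) (s : Fin n)
    (B : Finset (Fin n))
    (hBD : B ⊆ absRun N (fun i => dist q (p i)) k 2 n {s} {s})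
    (hcard : B.card = k)
    (hB : ∀ j ∈ B, ∀ v ∈ absRun N (fun i => dist q (p i)) k 2 n {s} {s},
      v ∉ B → dist q (p j) ≤ dist q (p v)) :
    ∀ v : Fin n, v ∉ B → ∀ j ∈ B, dist q (p j) ≤ dist q (p v) :=
  stmt12_general p N hnav q k s B hBD hcard hB
end

section
/- Abstract invariant version of the main theorem: Let d be a metric, q a point, 0 < γ ≤ 2, and let D ⊆ V be a finite set of nodes of a navigable graph G with subsets E ⊆ D such that (i) every out-neighbor of every node in E lies in D, and (ii) every node u ∈ D \ E satisfies d(q,u) ≥ (1+γ)·d(q,x̃), where x̃ ∈ E. Then every node z ∈ V \ D satisfies d(q,z) ≥ (γ/2)·d(q,x̃). -/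
/-- Abstract invariant version of the main theorem: on a navigable graph,
if every out-neighbor of every node of `E` lies in `D ⊇ E`, and every discovered but
unexpanded node `u ∈ D \ E` satisfies `d(q,u) ≥ (1+γ)·d(q,x̃)` for some `x̃ ∈ E` and
`0 < γ ≤ 2`, then every node `z ∉ D` satisfies `d(q,z) ≥ (γ/2)·d(q,x̃)`. -/
theorem stmt13 {X : Type*} [MetricSpace X] {n : ℕ} (p : Fin n → X)
    (hinj : Function.Injective p)
    (N : Fin n → Finset (Fin n))
    (hnav : ∀ x y : Fin n, x ≠ y → ∃ z ∈ N x, dist (p z) (p y) < dist (p x) (p y))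
    (q : X) (γ : ℝ) (hγ1 : 0 < γ) (hγ2 : γ ≤ 2)
    (D E : Finset (Fin n)) (hED : E ⊆ D)
    (xt : Fin n) (hxt : xt ∈ E)
    (hi : ∀ v ∈ E, N v ⊆ D)
    (hii : ∀ u ∈ D, u ∉ E → dist q (p u) ≥ (1 + γ) * dist q (p xt)) :
    ∀ z : Fin n, z ∉ D → dist q (p z) ≥ γ / 2 * dist q (p xt) := by
  intro z hz
  by_contra hlt
  push_neg at hlt
  -- pick w ∈ E minimizing dist to p z
  obtain ⟨w, hwE, hwmin⟩ := E.exists_min_image (fun v => dist (p v) (p z)) ⟨xt, hxt⟩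
  have hwz : w ≠ z := fun h => hz (h ▸ hED hwE)
  obtain ⟨z', hz'N, hz'lt⟩ := hnav w z hwz
  have hz'D : z' ∈ D := hi w hwE hz'N
  have hz'E : z' ∉ E := by
    intro hE
    exact absurd (hwmin z' hE) (not_le.mpr hz'lt)
  have h1 : dist (p w) (p z) ≤ dist (p xt) (p z) := hwmin xt hxt
  have h2 : dist q (p z') ≤ dist q (p z) + dist (p z) (p z') := dist_triangle _ _ _
  have h3 : dist (p xt) (p z) ≤ dist (p xt) q + dist q (p z) := dist_triangle _ _ _
  have h4 := hii z' hz'D hz'E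
  have hdq : 0 ≤ dist q (p xt) := dist_nonneg
  have hx : dist (p xt) q = dist q (p xt) := dist_comm _ _
  have hzz : dist (p z) (p z') = dist (p z') (p z) := dist_comm _ _
  nlinarith [hlt, hz'lt, h1, h2, h3, h4]
end

section
/- The Adaptive Beam Search V2 stopping rule also satisfies the approximation guarantee: if search on a navigable graph G terminates using the rule 'stop at candidate x when d(q,x) ≥ d_1 + γ·d_k', where d_1 and d_k are the distances from q to the closest and k-th closest discovered nodes, with 0 < γ ≤ 2, then every node v not among the returned k nodes B satisfies d(q,v) ≥ (γ/2)·max_{j∈B} d(q,j). -/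
/-- The Adaptive Beam Search V2 stopping rule also satisfies the
approximation guarantee: if at termination every discovered-but-unexpanded node `w`
satisfies `d(q,w) ≥ d₁ + γ·d_k` (where `d₁` and `d_k` are the distances from `q` to the
closest and `k`-th closest discovered nodes, i.e. the min and max over the returned set
`B` of the `k` closest discovered nodes), with `0 < γ ≤ 2`, then every node `v ∉ B`
satisfies `d(q,v) ≥ (γ/2)·max_{j∈B} d(q,j)`. -/
theorem stmt19 {X : Type*} [MetricSpace X] {n : ℕ} (p : Fin n → X)
    (hinj : Function.Injective p)
    (N : Fin n → Finset (Fin n))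
    (hnav : ∀ x y : Fin n, x ≠ y → ∃ z ∈ N x, dist (p z) (p y) < dist (p x) (p y))
    (q : X) (γ : ℝ) (hγ1 : 0 < γ) (hγ2 : γ ≤ 2)
    (k : ℕ) (hk : 1 ≤ k)
    (E D B : Finset (Fin n)) (hED : E ⊆ D)
    (hexp : ∀ v ∈ E, N v ⊆ D)
    (hBD : B ⊆ D) (hcard : B.card = k) (hBne : B.Nonempty)
    (hB : ∀ j ∈ B, ∀ v ∈ D, v ∉ B → dist q (p j) ≤ dist q (p v))
    (hterm : ∀ w ∈ D, w ∉ E →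
      dist q (p w) ≥ B.inf' hBne (fun j => dist q (p j)) +
        γ * B.sup' hBne (fun j => dist q (p j))) :
    ∀ v : Fin n, v ∉ B →
      dist q (p v) ≥ γ / 2 * B.sup' hBne (fun j => dist q (p j)) := by
  intro v hv
  set dk := B.sup' hBne (fun j => dist q (p j)) with hdk
  have hdk0 : 0 ≤ dk := by
    obtain ⟨j, hj⟩ := hBne
    exact le_trans dist_nonneg (Finset.le_sup' (fun j => dist q (p j)) hj)
  by_cases hvD : v ∈ D
  · have h1 : dk ≤ dist q (p v) := by
      rw [hdk]
      exact Finset.sup'_le _ _ fun j hj => hB j hj v hvD hv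
    have h2 : γ / 2 * dk ≤ 1 * dk :=
      mul_le_mul_of_nonneg_right (by linarith) hdk0
    linarith
  · have hDne : D.Nonempty := hBne.mono hBD
    obtain ⟨x, hxD, hxmin⟩ := D.exists_min_image (fun z => dist (p z) (p v)) hDne
    have hxv : x ≠ v := fun h => hvD (h ▸ hxD)
    have hxE : x ∉ E := by
      intro hxE
      obtain ⟨z, hzN, hzlt⟩ := hnav x v hxv
      exact absurd (hxmin z (hexp x hxE hzN)) (not_le.mpr hzlt)
    have hx := hterm x hxD hxE
    obtain ⟨j1, hj1, hj1min⟩ := B.exists_min_image (fun j => dist q (p j)) hBne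
    have hd1 : B.inf' hBne (fun j => dist q (p j)) = dist q (p j1) :=
      le_antisymm (Finset.inf'_le _ hj1) (Finset.le_inf' _ _ hj1min)
    have h2 : dist (p x) (p v) ≤ dist (p j1) (p v) := hxmin j1 (hBD hj1)
    have h3 : dist (p j1) (p v) ≤ dist q (p j1) + dist q (p v) := by
      have := dist_triangle (p j1) q (p v)
      rw [dist_comm (p j1) q] at this
      linarith
    have h4 : dist q (p x) ≤ dist q (p v) + dist (p x) (p v) := by
      have := dist_triangle q (p v) (p x)
      rw [dist_comm (p v) (p x)] at this
      linarith
    rw [hd1] at hx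
    linarith
end
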